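/- Let Γ × Δ be a direct product of groups with Γ amenable. Then Γ × Δ splits over an amenable subgroup if and only if Δ splits over an amenable subgroup, provided Δ is non-amenable. -/

import Mathlib

/-!
Amenability in this sense passes to groups admitting an injective homomorphism into an amenable
group (push the mean forward along the projection onto the image given by a right transversal,
which is equivariant) and to finite products: the mean of `A ⊆ G × H` is the integral against the
mean of `H` of the `G`-means of the slices of `A`, where the integral of a `[0, 1]`-valued function
against a finitely additive mean is the limit of its layer-cake lower sums.

If `Δ` splits, let `Γ × Δ` act through `Δ`; its edge stabilizers are products of `Γ` with those of
`Δ`. Conversely, restrict an action of `Γ × Δ` to `Δ`; its edge stabilizers embed into those of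
`Γ × Δ`. If `Δ` fixed a vertex, its fixed subtree would be `Γ`-invariant, and an edge in it would
make `Δ` a subgroup of an amenable edge stabilizer; so it is a single vertex, fixed by `Γ × Δ`.
-/

/-- A group is amenable if it carries a left-invariant finitely additive
probability measure defined on all subsets. -/
def IsAmenable (G : Type*) [Group G] : Prop :=
  ∃ μ : Set G → ℝ,
    (∀ A : Set G, 0 ≤ μ A) ∧
    μ Set.univ = 1 ∧
    (∀ A B : Set G, Disjoint A B → μ (A ∪ B) = μ A + μ B) ∧
    (∀ (g : G) (A : Set G), μ ((g * ·) '' A) = μ A)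

/-- A group splits over an amenable subgroup if it acts on a tree by graph
automorphisms with no globally fixed vertex, no edge inversions, and all
edge stabilizers amenable. -/
def SplitsOverAmenable (G : Type*) [Group G] : Prop :=
  ∃ (V : Type) (T : SimpleGraph V) (φ : G →* Equiv.Perm V),
    T.IsTree ∧
    (∀ (g : G) (u v : V), T.Adj u v → T.Adj (φ g u) (φ g v)) ∧
    (¬ ∃ (g : G) (u v : V), T.Adj u v ∧ φ g u = v ∧ φ g v = u) ∧
    (¬ ∃ v : V, ∀ g : G, φ g v = v) ∧
    (∀ u v : V, T.Adj u v →
      IsAmenable ((MulAction.stabilizer (Equiv.Perm V) u ⊓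
        MulAction.stabilizer (Equiv.Perm V) v).comap φ))

open Filter Topology

section Mean

variable {X : Type*}

structure IsMean (μ : Set X → ℝ) : Prop where
  nonneg : ∀ A, 0 ≤ μ A
  univ_eq_one : μ Set.univ = 1
  union : ∀ A B, Disjoint A B → μ (A ∪ B) = μ A + μ B

variable {μ : Set X → ℝ}

/-- A finitely supported `c : Set X →₀ ℝ` encodes the simple function `∑ c A • 1_A`; this is its
value at `x`. -/
noncomputable def simpleEval (x : X) : (Set X →₀ ℝ) →ₗ[ℝ] ℝ :=
  Finsupp.linearCombination ℝ fun A => A.indicator 1 x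

theorem simpleEval_single (x : X) (A : Set X) (r : ℝ) :
    simpleEval x (Finsupp.single A r) = r * A.indicator 1 x := by
  simp [simpleEval]

namespace IsMean

theorem empty (hμ : IsMean μ) : μ ∅ = 0 := by
  have := hμ.union ∅ ∅ (Set.disjoint_empty _)
  simp only [Set.union_empty] at this
  linarith

theorem inter_add_diff (hμ : IsMean μ) (A B : Set X) : μ (A ∩ B) + μ (A \ B) = μ A := by
  rw [← hμ.union _ _ (Set.disjoint_sdiff_inter.symm), Set.inter_union_sdiff]

theorem mem_Icc (hμ : IsMean μ) (A : Set X) : μ A ∈ Set.Icc 0 1 := by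
  refine ⟨hμ.nonneg A, ?_⟩
  have := hμ.inter_add_diff Set.univ A
  rw [hμ.univ_eq_one, Set.univ_inter] at this
  linarith [hμ.nonneg (Set.univ \ A)]

theorem comp_preimage {Y : Type*} (hμ : IsMean μ) (r : X → Y) : IsMean (μ ∘ Set.preimage r) where
  nonneg _ := hμ.nonneg _
  univ_eq_one := hμ.univ_eq_one
  union _ _ hAB := hμ.union _ _ (hAB.preimage r)

/-- The induction on `c` splits `S` along one set of the support at a time, which is why `e` and `S`
are generalized. -/
theorem linearCombination_inter_nonneg (hμ : IsMean μ) (c : Set X →₀ ℝ) :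
    ∀ (e : ℝ) (S : Set X), (∀ x ∈ S, 0 ≤ e + simpleEval x c) →
      0 ≤ e * μ S + Finsupp.linearCombination ℝ (fun A => μ (A ∩ S)) c := by
  induction c using Finsupp.induction with
  | zero =>
    intro e S h
    rcases S.eq_empty_or_nonempty with rfl | ⟨x, hx⟩
    · simp [hμ.empty]
    · simpa using mul_nonneg (by simpa using h x hx) (hμ.nonneg S)
  | single_add A r c _ _ ih =>
    intro e S h
    have hin := ih (e + r) (S ∩ A) fun x hx => by
      simpa [simpleEval_single, hx.2, add_assoc] using h x hx.1
    have hout := ih e (S \ A) fun x hx => by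
      simpa [simpleEval_single, hx.2] using h x hx.1
    have hsplit : Finsupp.linearCombination ℝ (fun B => μ (B ∩ S)) c =
        Finsupp.linearCombination ℝ (fun B => μ (B ∩ (S ∩ A))) c +
          Finsupp.linearCombination ℝ (fun B => μ (B ∩ (S \ A))) c := by
      simp only [Finsupp.linearCombination_apply, smul_eq_mul, ← Finsupp.sum_add, ← mul_add]
      congr! 3 with B
      rw [← hμ.inter_add_diff (B ∩ S) A, Set.inter_assoc, Set.sdiff_eq, Set.sdiff_eq,
        Set.inter_assoc]
    have hS := hμ.inter_add_diff S A
    rw [map_add, Finsupp.linearCombination_single, smul_eq_mul, hsplit, Set.inter_comm A S, ← hS]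
    linarith

theorem linearCombination_nonneg (hμ : IsMean μ) {c : Set X →₀ ℝ}
    (hc : ∀ x, 0 ≤ simpleEval x c) : 0 ≤ Finsupp.linearCombination ℝ μ c := by
  simpa [hμ.univ_eq_one] using hμ.linearCombination_inter_nonneg c 0 Set.univ (by simpa using hc)

theorem linearCombination_le_add (hμ : IsMean μ) {c d : Set X →₀ ℝ} {e : ℝ}
    (h : ∀ x, simpleEval x c ≤ e + simpleEval x d) :
    Finsupp.linearCombination ℝ μ c ≤ e + Finsupp.linearCombination ℝ μ d := by
  have := hμ.linearCombination_nonneg (c := Finsupp.single Set.univ e + d - c) fun x => by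
    simpa [simpleEval_single] using h x
  simpa [hμ.univ_eq_one] using this

theorem linearCombination_eq (hμ : IsMean μ) {c d : Set X →₀ ℝ}
    (h : ∀ x, simpleEval x c = simpleEval x d) :
    Finsupp.linearCombination ℝ μ c = Finsupp.linearCombination ℝ μ d := by
  apply le_antisymm
  · simpa using hμ.linearCombination_le_add (e := 0) fun x => (h x).le.trans (by simp)
  · simpa using hμ.linearCombination_le_add (e := 0) fun x => (h x).ge.trans (by simp)

end IsMean

/-- The layer-cake approximation of `f` from below, with `n` levels. -/
noncomputable def layers (n : ℕ) (f : X → ℝ) : Set X →₀ ℝ :=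
  ∑ k ∈ Finset.range n, Finsupp.single {x | (k + 1 : ℝ) ≤ n * f x} (n : ℝ)⁻¹

theorem simpleEval_layers {n : ℕ} {f : X → ℝ} {x : X} (hfx : f x ∈ Set.Icc 0 1) :
    simpleEval x (layers n f) = ⌊n * f x⌋₊ / n := by
  have hfloor : ⌊n * f x⌋₊ ≤ n := Nat.floor_le_of_le (by nlinarith [hfx.2])
  have hlevels : (Finset.range n).filter (fun k : ℕ => (k + 1 : ℝ) ≤ n * f x) =
      Finset.range ⌊n * f x⌋₊ := by
    have hk (k : ℕ) : (k + 1 : ℝ) ≤ n * f x ↔ k + 1 ≤ ⌊n * f x⌋₊ := by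
      rw [Nat.le_floor_iff (by nlinarith [hfx.1])]
      push_cast
      rfl
    ext k
    simp only [Finset.mem_filter, Finset.mem_range, hk]
    omega
  simp only [layers, map_sum, simpleEval_single, Set.indicator_apply, Set.mem_ofPred_eq,
    Pi.one_apply, mul_ite, mul_one, mul_zero]
  rw [← Finset.sum_filter, hlevels]
  simp [div_eq_mul_inv, mul_comm]

variable {f g : X → ℝ} {n m : ℕ}

theorem simpleEval_layers_nonneg (hf : ∀ x, f x ∈ Set.Icc 0 1) (x : X) :
    0 ≤ simpleEval x (layers n f) := by
  rw [simpleEval_layers (hf x)]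
  positivity

theorem simpleEval_layers_le (hf : ∀ x, f x ∈ Set.Icc 0 1) (x : X) :
    simpleEval x (layers n f) ≤ f x := by
  rw [simpleEval_layers (hf x)]
  rcases n.eq_zero_or_pos with rfl | hn
  · simpa using (hf x).1
  · rw [div_le_iff₀ (by positivity), mul_comm]
    exact Nat.floor_le (by nlinarith [(hf x).1])

theorem le_simpleEval_layers_add (hn : 0 < n) (hf : ∀ x, f x ∈ Set.Icc 0 1) (x : X) :
    f x ≤ simpleEval x (layers n f) + 1 / n := by
  rw [simpleEval_layers (hf x), ← add_div, le_div_iff₀ (by positivity), mul_comm]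
  exact (Nat.lt_floor_add_one _).le

noncomputable def layerSum (μ : Set X → ℝ) (n : ℕ) (f : X → ℝ) : ℝ :=
  Finsupp.linearCombination ℝ μ (layers n f)

theorem layerSum_eq_sum (μ : Set X → ℝ) (n : ℕ) (f : X → ℝ) :
    layerSum μ n f = ∑ k ∈ Finset.range n, (n : ℝ)⁻¹ * μ {x | (k + 1 : ℝ) ≤ n * f x} := by
  simp [layerSum, layers, map_sum]

theorem layerSum_nonneg (hμ : IsMean μ) (hf : ∀ x, f x ∈ Set.Icc 0 1) : 0 ≤ layerSum μ n f :=
  hμ.linearCombination_nonneg (simpleEval_layers_nonneg hf)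

theorem layerSum_le_add (hμ : IsMean μ) (hm : 0 < m) (hf : ∀ x, f x ∈ Set.Icc 0 1) :
    layerSum μ n f ≤ 1 / m + layerSum μ m f :=
  hμ.linearCombination_le_add fun x => by
    linarith [simpleEval_layers_le (n := n) hf x, le_simpleEval_layers_add hm hf x]

theorem abs_layerSum_sub_le (hμ : IsMean μ) (hn : 0 < n) (hm : 0 < m)
    (hf : ∀ x, f x ∈ Set.Icc 0 1) : |layerSum μ n f - layerSum μ m f| ≤ 1 / n + 1 / m := by
  have := layerSum_le_add hμ hm hf (n := n)
  have := layerSum_le_add hμ hn hf (n := m)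
  have : (0 : ℝ) < 1 / n := by positivity
  have : (0 : ℝ) < 1 / m := by positivity
  rw [abs_le]
  constructor <;> linarith

theorem abs_layerSum_add_sub_le (hμ : IsMean μ) (hn : 0 < n) (hf : ∀ x, f x ∈ Set.Icc 0 1)
    (hg : ∀ x, g x ∈ Set.Icc 0 1) (hfg : ∀ x, f x + g x ∈ Set.Icc 0 1) :
    |layerSum μ n (fun x => f x + g x) - (layerSum μ n f + layerSum μ n g)| ≤ 2 / n := by
  have htwo : (2 : ℝ) / n = 1 / n + 1 / n := by ring
  have hle := hμ.linearCombination_le_add (c := layers n fun x => f x + g x)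
    (d := layers n f + layers n g) (e := 2 / n) fun x => by
      rw [map_add]
      linarith [simpleEval_layers_le (n := n) hfg x, le_simpleEval_layers_add hn hf x,
        le_simpleEval_layers_add hn hg x]
  have hge := hμ.linearCombination_le_add (c := layers n f + layers n g)
    (d := layers n fun x => f x + g x) (e := 1 / n) fun x => by
      rw [map_add]
      linarith [simpleEval_layers_le (n := n) hf x, simpleEval_layers_le (n := n) hg x,
        le_simpleEval_layers_add hn hfg x]
  rw [map_add] at hle hge
  simp only [layerSum]
  have : (0 : ℝ) < 1 / n := by positivity
  rw [abs_le]
  constructor <;> linarith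

theorem layerSum_one (hμ : IsMean μ) (hn : 0 < n) : layerSum μ n (fun _ => 1) = 1 := by
  have := hμ.linearCombination_eq (c := layers n fun _ => 1) (d := Finsupp.single Set.univ 1)
    fun x => by
      rw [simpleEval_layers (by simp), simpleEval_single]
      simp [hn.ne']
  simpa [layerSum, hμ.univ_eq_one] using this

theorem layerSum_comp {τ : X → X} (hτ : ∀ A, μ (τ ⁻¹' A) = μ A) (n : ℕ) (f : X → ℝ) :
    layerSum μ n (f ∘ τ) = layerSum μ n f := by
  simp only [layerSum_eq_sum]
  exact Finset.sum_congr rfl fun k _ => congrArg _ (hτ {x | (k + 1 : ℝ) ≤ n * f x})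

/-- Meaningful for `[0, 1]`-valued `f`, whose lower sums converge; otherwise `limUnder` may return a
junk value. -/
noncomputable def meanIntegral (μ : Set X → ℝ) (f : X → ℝ) : ℝ :=
  limUnder atTop fun n : ℕ => layerSum μ (n + 1) f

theorem tendsto_layerSum_meanIntegral (hμ : IsMean μ) (hf : ∀ x, f x ∈ Set.Icc 0 1) :
    Tendsto (fun n : ℕ => layerSum μ (n + 1) f) atTop (𝓝 (meanIntegral μ f)) := by
  refine (cauchySeq_of_le_tendsto_0 (fun N : ℕ => 2 / ((N + 1 : ℕ) : ℝ)) (fun n m N hn hm => ?_)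
    ((tendsto_const_div_atTop_nhds_zero_nat 2).comp (tendsto_add_atTop_nat 1))).tendsto_limUnder
  calc dist (layerSum μ (n + 1) f) (layerSum μ (m + 1) f)
      ≤ 1 / ((n + 1 : ℕ) : ℝ) + 1 / ((m + 1 : ℕ) : ℝ) :=
        abs_layerSum_sub_le hμ n.succ_pos m.succ_pos hf
    _ ≤ 1 / ((N + 1 : ℕ) : ℝ) + 1 / ((N + 1 : ℕ) : ℝ) := by gcongr
    _ = 2 / ((N + 1 : ℕ) : ℝ) := by ring

theorem meanIntegral_nonneg (hμ : IsMean μ) (hf : ∀ x, f x ∈ Set.Icc 0 1) :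
    0 ≤ meanIntegral μ f :=
  ge_of_tendsto' (tendsto_layerSum_meanIntegral hμ hf) fun _ => layerSum_nonneg hμ hf

theorem meanIntegral_one (hμ : IsMean μ) : meanIntegral μ (fun _ => 1) = 1 := by
  refine tendsto_nhds_unique (tendsto_layerSum_meanIntegral hμ fun _ => by simp) ?_
  simp only [layerSum_one hμ (Nat.succ_pos _), tendsto_const_nhds]

theorem meanIntegral_add (hμ : IsMean μ) (hf : ∀ x, f x ∈ Set.Icc 0 1)
    (hg : ∀ x, g x ∈ Set.Icc 0 1) (hfg : ∀ x, f x + g x ∈ Set.Icc 0 1) :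
    meanIntegral μ (fun x => f x + g x) = meanIntegral μ f + meanIntegral μ g := by
  have herr : Tendsto (fun n : ℕ => layerSum μ (n + 1) (fun x => f x + g x) -
      (layerSum μ (n + 1) f + layerSum μ (n + 1) g)) atTop (𝓝 0) :=
    squeeze_zero_norm (fun n => abs_layerSum_add_sub_le hμ n.succ_pos hf hg hfg)
      ((tendsto_const_div_atTop_nhds_zero_nat 2).comp (tendsto_add_atTop_nat 1))
  refine tendsto_nhds_unique (tendsto_layerSum_meanIntegral hμ hfg) ?_
  simpa using ((tendsto_layerSum_meanIntegral hμ hf).add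
    (tendsto_layerSum_meanIntegral hμ hg)).add herr

theorem meanIntegral_comp {τ : X → X} (hτ : ∀ A, μ (τ ⁻¹' A) = μ A) (f : X → ℝ) :
    meanIntegral μ (f ∘ τ) = meanIntegral μ f := by
  simp only [meanIntegral, layerSum_comp hτ]

end Mean

section Amenable

variable {G H : Type*} [Group G] [Group H]

theorem isAmenable_iff_isMean :
    IsAmenable G ↔ ∃ μ : Set G → ℝ, IsMean μ ∧ ∀ g A, μ ((g * ·) ⁻¹' A) = μ A := by
  constructor
  · rintro ⟨μ, h0, h1, hadd, hinv⟩
    exact ⟨μ, ⟨h0, h1, hadd⟩, fun g A => by rw [← Set.image_mul_left', hinv]⟩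
  · rintro ⟨μ, ⟨h0, h1, hadd⟩, hinv⟩
    exact ⟨μ, h0, h1, hadd, fun g A => by rw [Set.image_mul_left, hinv]⟩

theorem IsAmenable.of_injective {f : H →* G} (hf : Function.Injective f) (hG : IsAmenable G) :
    IsAmenable H := by
  obtain ⟨μ, hμ, hinv⟩ := isAmenable_iff_isMean.1 hG
  obtain ⟨T, hT, -⟩ := f.range.exists_isComplement_right 1
  let r : G → H := fun g => (MonoidHom.ofInjective hf).symm (hT.equiv g).1
  have hr (h : H) (g : G) : r (f h * g) = h * r g := by
    simp only [r, hT.equiv_mul_left_of_mem ⟨h, rfl⟩, map_mul]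
    congr 1
    exact (MulEquiv.symm_apply_eq _).2 (Subtype.ext (MonoidHom.ofInjective_apply hf).symm)
  refine isAmenable_iff_isMean.2 ⟨μ ∘ Set.preimage r, hμ.comp_preimage r, fun h A => ?_⟩
  change μ (r ⁻¹' ((h * ·) ⁻¹' A)) = μ (r ⁻¹' A)
  rw [← hinv (f h) (r ⁻¹' A)]
  congr 1
  ext g
  simp [hr]

theorem IsAmenable.comap {K : Subgroup G} {f : H →* G} (hf : Function.Injective f)
    (hK : IsAmenable K) : IsAmenable (K.comap f) :=
  hK.of_injective (f := f.subgroupComap K) fun _ _ hab => Subtype.ext (hf congr($hab.1))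

theorem IsAmenable.of_forall_mem {K : Subgroup G} (hK : ∀ g, g ∈ K) (h : IsAmenable K) :
    IsAmenable G :=
  h.of_injective (f := (MonoidHom.id G).codRestrict K hK) fun _ _ h => congrArg Subtype.val h

theorem IsAmenable.prod (hG : IsAmenable G) (hH : IsAmenable H) : IsAmenable (G × H) := by
  obtain ⟨μ, hμ, hμinv⟩ := isAmenable_iff_isMean.1 hG
  obtain ⟨ν, hν, hνinv⟩ := isAmenable_iff_isMean.1 hH
  have hslice (A : Set (G × H)) (h : H) : μ ((·, h) ⁻¹' A) ∈ Set.Icc 0 1 := hμ.mem_Icc _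
  refine isAmenable_iff_isMean.2 ⟨fun A => meanIntegral ν fun h => μ ((·, h) ⁻¹' A),
    ⟨fun A => meanIntegral_nonneg hν (hslice A), ?_, fun A B hAB => ?_⟩, fun p A => ?_⟩
  · simpa [hμ.univ_eq_one] using meanIntegral_one hν
  · have hunion (h : H) : μ ((·, h) ⁻¹' (A ∪ B)) = μ ((·, h) ⁻¹' A) + μ ((·, h) ⁻¹' B) :=
      hμ.union _ _ (hAB.preimage _)
    simp only [hunion]
    exact meanIntegral_add hν (hslice A) (hslice B) fun h => hunion h ▸ hslice _ h
  · obtain ⟨g₀, h₀⟩ := p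
    have htranslate (h : H) :
        μ ((·, h) ⁻¹' (((g₀, h₀) * ·) ⁻¹' A)) = μ ((·, h₀ * h) ⁻¹' A) :=
      hμinv g₀ ((·, h₀ * h) ⁻¹' A)
    simp only [htranslate]
    exact meanIntegral_comp (hνinv h₀) fun h => μ ((·, h) ⁻¹' A)

theorem IsAmenable.comap_snd {K : Subgroup H} (hG : IsAmenable G) (hK : IsAmenable K) :
    IsAmenable (K.comap (MonoidHom.snd G H)) :=
  (hG.prod hK).of_injective
    (f := ((MonoidHom.fst G H).comp (Subgroup.subtype _)).prod
      ((MonoidHom.snd G H).subgroupComap K))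
    fun _ _ hab => Subtype.ext (Prod.ext congr($hab.1) congr(($hab.2 : H)))

end Amenable

theorem SimpleGraph.IsTree.exists_adj_forall_fixed {V : Type*} {T : SimpleGraph V} (hT : T.IsTree)
    {u w : V} (huw : u ≠ w) :
    ∃ x, T.Adj u x ∧ ∀ f : T →g T, Function.Injective f → f u = u → f w = w → f x = x := by
  obtain ⟨p, hp, hpu⟩ := hT.existsUnique_path u w
  refine ⟨p.snd, p.adj_snd fun hnil => huw hnil.eq, fun f hf hu hw => ?_⟩
  have hmap := hpu ((p.map f).copy hu hw) ((Walk.isPath_copy _ _ _).2 (hp.map hf))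
  simpa [Walk.getVert_copy, Walk.getVert_map] using congrArg Walk.snd hmap

section TreeAction

variable {G V : Type*} [Group G] {T : SimpleGraph V}

/-- A group fixing two distinct vertices of a tree fixes the first edge of the path between them. -/
theorem isAmenable_of_fixes_two_vertices (hT : T.IsTree) (φ : G →* Equiv.Perm V)
    (hadj : ∀ g u v, T.Adj u v → T.Adj (φ g u) (φ g v))
    (hstab : ∀ u v, T.Adj u v → IsAmenable ((MulAction.stabilizer (Equiv.Perm V) u ⊓
      MulAction.stabilizer (Equiv.Perm V) v).comap φ))
    {u w : V} (huw : u ≠ w) (hu : ∀ g, φ g u = u) (hw : ∀ g, φ g w = w) : IsAmenable G := by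
  obtain ⟨x, hux, hx⟩ := hT.exists_adj_forall_fixed huw
  have hfix (g : G) : φ g x = x := hx ⟨φ g, hadj g _ _⟩ (φ g).injective (hu g) (hw g)
  exact (hstab u x hux).of_forall_mem fun g => by exact ⟨hu g, hfix g⟩

end TreeAction

namespace SplitsOverAmenable

variable {Γ Δ : Type*} [Group Γ] [Group Δ]

theorem of_prod (hΔ : ¬ IsAmenable Δ) (h : SplitsOverAmenable (Γ × Δ)) :
    SplitsOverAmenable Δ := by
  obtain ⟨V, T, φ, hT, hadj, hinv, hfix, hstab⟩ := h
  have hstab' (u v : V) (huv : T.Adj u v) : IsAmenable ((MulAction.stabilizer (Equiv.Perm V) u ⊓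
      MulAction.stabilizer (Equiv.Perm V) v).comap (φ.comp (MonoidHom.inr Γ Δ))) := by
    rw [← Subgroup.comap_comap]
    exact (hstab u v huv).comap fun _ _ h => congrArg Prod.snd h
  refine ⟨V, T, φ.comp (MonoidHom.inr Γ Δ), hT, fun _ => hadj _, fun ⟨_, u, v, h⟩ =>
    hinv ⟨_, u, v, h⟩, fun ⟨v, hv⟩ => hfix ⟨v, fun p => ?_⟩, hstab'⟩
  have hΓ (γ : Γ) : φ (γ, 1) v = v := by
    by_contra hne
    refine hΔ (isAmenable_of_fixes_two_vertices hT _ (fun _ => hadj _) hstab' hne (fun δ => ?_) hv)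
    have hvδ : φ (1, δ) v = v := hv δ
    have := congr($(((MonoidHom.commute_inl_inr γ δ).map φ).eq) v)
    simp only [Equiv.Perm.mul_apply, MonoidHom.inl_apply, MonoidHom.inr_apply, hvδ] at this
    exact this.symm
  rw [← Prod.fst_mul_snd p, map_mul, Equiv.Perm.mul_apply]
  exact (congrArg _ (hv p.2)).trans (hΓ p.1)

theorem prod (hΓ : IsAmenable Γ) (h : SplitsOverAmenable Δ) :
    SplitsOverAmenable (Γ × Δ) := by
  obtain ⟨V, T, φ, hT, hadj, hinv, hfix, hstab⟩ := h
  refine ⟨V, T, φ.comp (MonoidHom.snd Γ Δ), hT, fun p => hadj p.2, fun ⟨p, u, v, h⟩ =>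
    hinv ⟨p.2, u, v, h⟩, fun ⟨v, hv⟩ => hfix ⟨v, fun δ => hv (1, δ)⟩, fun u v huv => ?_⟩
  rw [← Subgroup.comap_comap]
  exact hΓ.comap_snd (hstab u v huv)

end SplitsOverAmenable

/-- For `Γ` amenable and `Δ` non-amenable, the direct product `Γ × Δ` splits over an
amenable subgroup if and only if `Δ` does. -/
theorem stmt7 {Γ Δ : Type} [Group Γ] [Group Δ]
    (hΓ : IsAmenable Γ) (hΔ : ¬ IsAmenable Δ) :
    SplitsOverAmenable (Γ × Δ) ↔ SplitsOverAmenable Δ :=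
  ⟨SplitsOverAmenable.of_prod hΔ, SplitsOverAmenable.prod hΓ⟩
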